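/- If A is the unique maximum determinant positive definite completion of a partial symmetric Toeplitz matrix with prescribed diagonal a, prescribed super/subdiagonal b, and prescribed corner entries c (positions (1,n) and (n,1)), then A is persymmetric: A = J A J, where J is the reversal (anti-identity) matrix. -/

import Mathlib

/-!
Conjugation by the reversal matrix `J` maps the completions of the partial matrix to themselves
and preserves positive definiteness and the determinant, so `J * A * J` is again a maximizer.
The determinant is strictly log-concave on positive definite matrices:
`det A * det B ≤ det ((A + B) / 2) ^ 2`, with equality only for `A = B` (after the congruence
`A = Rᴴ R` this is AM-GM for the eigenvalues of `(R⁻¹)ᴴ B R⁻¹`). Since the positive definite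
completions form a convex set, the maximizer is unique, hence `J * A * J = A`.
-/

open Matrix

theorem Finset.eq_one_of_prod_sq_half_one_add_le {ι : Type*} {s : Finset ι} {x : ι → ℝ}
    (hx : ∀ i ∈ s, 0 < x i) (h : ∏ i ∈ s, ((1 + x i) / 2) ^ 2 ≤ ∏ i ∈ s, x i) :
    ∀ i ∈ s, x i = 1 := by
  by_contra! ⟨j, hj, hxj⟩
  have hlt : ∏ i ∈ s, x i < ∏ i ∈ s, ((1 + x i) / 2) ^ 2 := by
    refine Finset.prod_lt_prod hx (fun i _ => ?_) ⟨j, hj, ?_⟩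
    · nlinarith [sq_nonneg (x i - 1)]
    · nlinarith [sq_pos_of_ne_zero (sub_ne_zero.mpr hxj)]
  exact h.not_gt hlt

theorem Fin.toMatrix_revPerm_apply {n : ℕ} {α : Type*} [Zero α] [One α] (i j : Fin n) :
    ((Fin.revPerm : Equiv.Perm (Fin n)).toPEquiv.toMatrix : Matrix (Fin n) (Fin n) α) i j =
      if (i : ℕ) + j = n - 1 then 1 else 0 := by
  rw [PEquiv.toMatrix_apply]
  refine if_congr ?_ rfl rfl
  rw [Equiv.toPEquiv_apply, Option.mem_some_iff, Fin.ext_iff, Fin.revPerm_apply, Fin.val_rev]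
  omega

theorem Fin.toMatrix_revPerm_mul_mul {n : ℕ} {α : Type*} [NonAssocSemiring α]
    (A : Matrix (Fin n) (Fin n) α) :
    Fin.revPerm.toPEquiv.toMatrix * A * Fin.revPerm.toPEquiv.toMatrix =
      A.submatrix Fin.rev Fin.rev := by
  rw [PEquiv.toMatrix_toPEquiv_mul, PEquiv.mul_toMatrix_toPEquiv, submatrix_submatrix,
    Fin.revPerm_symm]
  rfl

namespace Matrix

theorem convex_setOf_posDef {m : Type*} : Convex ℝ {M : Matrix m m ℝ | M.PosDef} := by
  intro A hA B hB s t hs ht hst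
  rcases hs.eq_or_lt with rfl | hs
  · simpa [show t = 1 by linarith] using hB
  · exact (hA.smul hs).add_posSemidef (hB.posSemidef.smul ht)

variable {m : Type*} [Fintype m] [DecidableEq m]

theorem PosDef.eq_one_of_det_half_one_add_sq_le {S : Matrix m m ℝ} (hS : S.PosDef)
    (h : ((2 : ℝ)⁻¹ • (1 + S)).det ^ 2 ≤ S.det) : S = 1 := by
  set U := hS.isHermitian.eigenvectorUnitary
  set μ := hS.isHermitian.eigenvalues
  have hspec : S = Unitary.conjStarAlgAut ℝ _ U (diagonal μ) := by
    simpa using hS.isHermitian.spectral_theorem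
  have hmid : (2 : ℝ)⁻¹ • (1 + S) =
      Unitary.conjStarAlgAut ℝ _ U (diagonal fun i => (1 + μ i) / 2) := by
    have : diagonal (fun i => (1 + μ i) / 2) = (2 : ℝ)⁻¹ • (1 + diagonal μ) := by
      ext i j
      by_cases hij : i = j <;> simp [hij, div_eq_inv_mul]
    rw [this, map_smul, map_add, map_one, ← hspec]
  have hdet (d : m → ℝ) : (Unitary.conjStarAlgAut ℝ _ U (diagonal d)).det = ∏ i, d i := by
    rw [Unitary.conjStarAlgAut_apply, det_mul, det_mul, det_diagonal, mul_right_comm, ← det_mul,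
      Unitary.mul_star_self_of_mem U.2, det_one, one_mul]
  have hμ : ∀ i, μ i = 1 := by
    rw [hmid, hdet, hspec, hdet, ← Finset.prod_pow] at h
    simpa using Finset.eq_one_of_prod_sq_half_one_add_le (fun i _ => hS.eigenvalues_pos i) h
  rw [hspec, show μ = fun _ => 1 from funext hμ, diagonal_one, map_one]

open scoped MatrixOrder in
theorem PosDef.eq_of_det_midpoint_sq_le {A B : Matrix m m ℝ} (hA : A.PosDef) (hB : B.PosDef)
    (h : ((2 : ℝ)⁻¹ • (A + B)).det ^ 2 ≤ A.det * B.det) : A = B := by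
  obtain ⟨R, rfl⟩ := CStarAlgebra.nonneg_iff_eq_star_mul_self.mp hA.posSemidef.nonneg
  have hR : IsUnit R := by
    rw [isUnit_iff_isUnit_det, isUnit_iff_ne_zero]
    intro h0
    simpa [det_mul, h0] using hA.det_pos
  set S := (R⁻¹)ᴴ * B * R⁻¹
  have hBS : B = star R * S * R := by
    simp only [S, star_eq_conjTranspose, conjTranspose_nonsing_inv, Matrix.mul_assoc,
      nonsing_inv_mul _ ((isUnit_iff_isUnit_det R).mp hR), Matrix.mul_one]
    exact (mul_nonsing_inv_cancel_left (A := Rᴴ) B ((isUnit_iff_isUnit_det _).mp hR.star)).symm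
  have hS : S.PosDef :=
    hB.conjTranspose_mul_mul_same (mulVec_injective_iff_isUnit.mpr (isUnit_nonsing_inv_iff.mpr hR))
  have hdet (X : Matrix m m ℝ) : (star R * X * R).det = (star R * R).det * X.det := by
    rw [det_mul, det_mul, det_mul]
    ring
  have hmid : (2 : ℝ)⁻¹ • (star R * R + B) = star R * ((2 : ℝ)⁻¹ • (1 + S)) * R := by
    rw [hBS, Matrix.mul_smul, Matrix.smul_mul, Matrix.mul_add, Matrix.add_mul, Matrix.mul_one]
  rw [hmid, hdet, hBS, hdet] at h
  have hS1 : S = 1 := hS.eq_one_of_det_half_one_add_sq_le <| by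
    refine le_of_mul_le_mul_left (a := (star R * R).det ^ 2) ?_ (pow_pos hA.det_pos 2)
    linear_combination h
  rw [hBS, hS1, Matrix.mul_one]

theorem eq_of_isMaxOn_det {C : Set (Matrix m m ℝ)} (hC : Convex ℝ C)
    (hCpd : ∀ M ∈ C, M.PosDef) {A B : Matrix m m ℝ} (hA : A ∈ C) (hB : B ∈ C)
    (hAmax : IsMaxOn det C A) (hBmax : IsMaxOn det C B) : A = B := by
  have hmid : (2 : ℝ)⁻¹ • (A + B) ∈ C := by
    simpa only [midpoint_eq_smul_add, invOf_eq_inv] using hC.midpoint_mem hA hB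
  refine (hCpd A hA).eq_of_det_midpoint_sq_le (hCpd B hB) ?_
  rw [sq]
  exact mul_le_mul (hAmax hmid) (hBmax hmid) (hCpd _ hmid).det_pos.le (hCpd A hA).det_pos.le

end Matrix

section CycleCompletion

variable {n : ℕ} (hn : 0 < n) (a b c : ℝ)

/-- The prescribed off-diagonal positions are the edges of the `n`-cycle. -/
def IsCycleCompletion (M : Matrix (Fin n) (Fin n) ℝ) : Prop :=
  M.IsSymm ∧ (∀ i, M i i = a) ∧ (∀ i j : Fin n, (i : ℕ) + 1 = j → M i j = b) ∧
    M ⟨0, hn⟩ ⟨n - 1, by omega⟩ = c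

theorem convex_setOf_isCycleCompletion : Convex ℝ {M | IsCycleCompletion hn a b c M} := by
  rintro M ⟨hMsymm, hMdiag, hMsup, hMcorner⟩ N ⟨hNsymm, hNdiag, hNsup, hNcorner⟩ s t - - hst
  have hcomb (x : ℝ) : s * x + t * x = x := by rw [← add_mul, hst, one_mul]
  refine ⟨(hMsymm.smul s).add (hNsymm.smul t), fun i => ?_, fun i j hij => ?_, ?_⟩ <;>
    simp only [Matrix.add_apply, Matrix.smul_apply, smul_eq_mul]
  · rw [hMdiag, hNdiag, hcomb]
  · rw [hMsup _ _ hij, hNsup _ _ hij, hcomb]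
  · rw [hMcorner, hNcorner, hcomb]

variable {hn a b c}

theorem IsCycleCompletion.submatrix_rev {M : Matrix (Fin n) (Fin n) ℝ}
    (hM : IsCycleCompletion hn a b c M) :
    IsCycleCompletion hn a b c (M.submatrix Fin.rev Fin.rev) := by
  obtain ⟨hsymm, hdiag, hsup, hcorner⟩ := hM
  refine ⟨hsymm.submatrix _, fun i => hdiag _, fun i j hij => ?_, ?_⟩
  · rw [submatrix_apply, ← hsymm.apply]
    exact hsup _ _ (by simp only [Fin.val_rev]; omega)
  · rw [submatrix_apply, ← hsymm.apply, ← hcorner]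
    congr 1
    ext
    simp only [Fin.val_rev]
    omega

end CycleCompletion

theorem stmt13 {n : ℕ} (hn : 4 ≤ n) (a b c : ℝ)
    (Completion : Matrix (Fin n) (Fin n) ℝ → Prop)
    (hCompletion : ∀ M, Completion M ↔ (M.IsSymm ∧ (∀ i, M i i = a) ∧
      (∀ i j : Fin n, (i : ℕ) + 1 = (j : ℕ) → M i j = b) ∧
      M ⟨0, by omega⟩ ⟨n - 1, by omega⟩ = c))
    (A : Matrix (Fin n) (Fin n) ℝ) (hA : Completion A) (hApd : A.PosDef)
    (hAmax : ∀ M, Completion M → M.PosDef → M.det ≤ A.det)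
    (J : Matrix (Fin n) (Fin n) ℝ)
    (hJ : ∀ i j : Fin n, J i j = if (i : ℕ) + (j : ℕ) = n - 1 then 1 else 0) :
    A = J * A * J := by
  have hJrev : J = Fin.revPerm.toPEquiv.toMatrix := by
    ext i j
    rw [hJ, Fin.toMatrix_revPerm_apply]
  rw [hJrev, Fin.toMatrix_revPerm_mul_mul]
  have hCycle : ∀ M, Completion M ↔ IsCycleCompletion (by omega) a b c M := hCompletion
  let C := {M | Completion M} ∩ {M : Matrix (Fin n) (Fin n) ℝ | M.PosDef}
  have hAmax' : IsMaxOn det C A := fun M hM => hAmax M hM.1 hM.2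
  refine eq_of_isMaxOn_det (C := C) (B := A.submatrix Fin.rev Fin.rev) ?_ (fun M hM => hM.2)
    ⟨hA, hApd⟩ ?_ hAmax' ?_
  · simp only [C, hCycle]
    exact (convex_setOf_isCycleCompletion _ a b c).inter convex_setOf_posDef
  · exact ⟨(hCycle _).2 ((hCycle A).1 hA).submatrix_rev, hApd.submatrix Fin.rev_injective⟩
  · exact fun M hM => (hAmax' hM).trans_eq (det_submatrix_equiv_self Fin.revPerm A).symm
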